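/- Consider a loop pattern L = (w_1,...,w_n) of Type IV, where w_i = (αθ_i, σθ_i) for a fixed single-head TGD σ = 'β, B → α' with β ∉ B, and w_1 ∼ w_n. Define the substitution θ' on var(σθ_n) by θ'(θ_n(X)) = θ_n(X) if θ_n(X) ∈ ⋂_{i=1}^n var(α_iθ_i) and θ'(θ_n(X)) = θ_1(X) otherwise. Then with θ* = θ' ∘ θ_n, the instantiated rule σθ* satisfies head(σθ*) = head(σθ_1), i.e., the last element of the loop can be re-instantiated so as to coincide with the first on the head atom. -/
import Mathlib


namespace Paper

/-- Terms: constants, variables, labeled nulls. -/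
inductive Term (C : Type) where
  | const : C → Term C
  | var   : ℕ → Term C
  | null  : ℕ → Term C
deriving DecidableEq

variable {C : Type}

/-- Relational atoms. -/
structure Atom (C : Type) where
  pred : ℕ
  args : List (Term C)

/-- Substitutions on variables. -/
abbrev Subst (C : Type) := ℕ → Term C

def Term.apply (θ : Subst C) : Term C → Term C
  | .const c => .const c
  | .var v   => θ v
  | .null n  => .null n

def Atom.apply (θ : Subst C) (a : Atom C) : Atom C :=
  ⟨a.pred, a.args.map (Term.apply θ)⟩

def Term.varsF : Term C → Finset ℕ
  | .var v => {v}
  | _ => ∅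

def Term.nullsF : Term C → Finset ℕ
  | .null n => {n}
  | _ => ∅

def Atom.varsF (a : Atom C) : Finset ℕ := a.args.foldr (fun t s => t.varsF ∪ s) ∅
def Atom.nullsF (a : Atom C) : Finset ℕ := a.args.foldr (fun t s => t.nullsF ∪ s) ∅

def atomsVars (l : List (Atom C)) : Finset ℕ := l.foldr (fun a s => a.varsF ∪ s) ∅
def atomsNulls (l : List (Atom C)) : Finset ℕ := l.foldr (fun a s => a.nullsF ∪ s) ∅

/-- A single-head TGD (existential rule) `body → ∃Z head`, where the
existential variables are exactly the head variables not in the body. -/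
structure TGD (C : Type) where
  body : List (Atom C)
  head : Atom C

def TGD.varsF (σ : TGD C) : Finset ℕ := atomsVars (σ.head :: σ.body)
def TGD.nullsF (σ : TGD C) : Finset ℕ := atomsNulls (σ.head :: σ.body)
def TGD.exVars (σ : TGD C) : Finset ℕ := σ.head.varsF \ atomsVars σ.body
def TGD.varsList (σ : TGD C) : List ℕ := σ.varsF.sort (· ≤ ·)

def TGD.applyS (θ : Subst C) (σ : TGD C) : TGD C :=
  ⟨σ.body.map (Atom.apply θ), σ.head.apply θ⟩

/-- Type comparability of two terms. -/
def TypeComp (t t' : Term C) : Prop :=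
  (∀ c, t = Term.const c ↔ t' = Term.const c) ∧
  ((∃ v, t = Term.var v) ↔ (∃ v, t' = Term.var v)) ∧
  ((∃ m, t = Term.null m) ↔ (∃ m, t' = Term.null m))

/-- Position comparability of two lists of terms. -/
def PosComp (l l' : List (Term C)) : Prop :=
  l.length = l'.length ∧
  (∀ i (hi : i < l.length) (hi' : i < l'.length),
      TypeComp (l.get ⟨i, hi⟩) (l'.get ⟨i, hi'⟩)) ∧
  (∀ i j (hi : i < l.length) (hj : j < l.length) (hi' : i < l'.length) (hj' : j < l'.length),
      l.get ⟨i, hi⟩ = l.get ⟨j, hj⟩ ↔ l'.get ⟨i, hi'⟩ = l'.get ⟨j, hj'⟩) ∧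
  (∀ t, t ∈ l → t ∈ l' →
    ∀ i (hi : i < l.length) (hi' : i < l'.length),
      (l.get ⟨i, hi⟩ = t ↔ l'.get ⟨i, hi'⟩ = t))

/-- One element of a derivation path: an atom together with an
instantiated rule `ρ = σθ`, recorded as the rule and the substitution. -/
structure Step (C : Type) where
  atom : Atom C
  rule : TGD C
  θ : Subst C

def Step.inst (s : Step C) : TGD C := s.rule.applyS s.θ

/-- The nulls introduced at this step by eliminating existential variables. -/
def Step.freshNulls (s : Step C) : Finset ℕ :=
  s.rule.exVars.biUnion (fun v => (s.θ v).nullsF)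

/-- Comparability of two derivation-path elements: same rule of `Sg`, and the
tuples of substituted terms are position comparable. -/
def PairComp (s s' : Step C) : Prop :=
  s.rule = s'.rule ∧ PosComp (s.rule.varsList.map s.θ) (s'.rule.varsList.map s'.θ)

/-- Derivation path of `Sg` (Definition 3 of the paper). -/
def IsDerivationPath (Sg : Set (TGD C)) (P : List (Step C)) : Prop :=
  (∀ s ∈ P, s.rule ∈ Sg ∧ s.atom = s.rule.head.apply s.θ) ∧
  (∀ i (hi : i + 1 < P.length),
      (P.get ⟨i+1, hi⟩).atom ∈ (P.get ⟨i, Nat.lt_of_succ_lt hi⟩).inst.body) ∧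
  (∀ i j (hi : i < P.length) (hj : j < P.length), i < j →
      ∀ m ∈ (P.get ⟨i, hi⟩).freshNulls, m ∉ (P.get ⟨j, hj⟩).inst.nullsF)

/-- Comparability of derivation paths. -/
def PathComp (P Q : List (Step C)) : Prop :=
  P.length = Q.length ∧
  ∀ i (hi : i < P.length) (hi' : i < Q.length), PairComp (P.get ⟨i, hi⟩) (Q.get ⟨i, hi'⟩)

/-- Loop pattern: first and last elements comparable, no other pair comparable. -/
def IsLoopPattern (Sg : Set (TGD C)) (P : List (Step C)) : Prop :=
  IsDerivationPath Sg P ∧ 2 ≤ P.length ∧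
  (∀ (h0 : 0 < P.length) (hl : P.length - 1 < P.length),
      PairComp (P.get ⟨0, h0⟩) (P.get ⟨P.length - 1, hl⟩)) ∧
  (∀ i j (hi : i < P.length) (hj : j < P.length), i < j → ¬(i = 0 ∧ j = P.length - 1) →
      ¬ PairComp (P.get ⟨i, hi⟩) (P.get ⟨j, hj⟩))

/-- The intersection `⋂_j var(α_j)` of head-atom variables along a path. -/
def interVars (P : List (Step C)) : Set ℕ := {v | ∀ s ∈ P, v ∈ s.atom.varsF}

/-- The loop-restricted splitting condition of Definition 8. -/
def LRcond (P : List (Step C)) : Prop :=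
  ∀ i (hi : i + 1 < P.length),
    ∃ Bh Bb : List (Atom C),
      (∀ a, a ∈ (P.get ⟨i, Nat.lt_of_succ_lt hi⟩).inst.body ↔ (a ∈ Bh ∨ a ∈ Bb)) ∧
      (∀ a, ¬(a ∈ Bh ∧ a ∈ Bb)) ∧
      (P.get ⟨i+1, hi⟩).atom ∈ Bb ∧
      ((((P.get ⟨i, Nat.lt_of_succ_lt hi⟩).atom.varsF ∪ atomsVars Bh) ∩ atomsVars Bb : Finset ℕ) : Set ℕ)
        = interVars P

/-- Loop restricted (LR) sets of TGDs. -/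
def LoopRestricted (Sg : Set (TGD C)) : Prop :=
  ∀ P, IsLoopPattern Sg P → LRcond P

/-- Homomorphisms: identity on constants, nulls map to constants or nulls. -/
def IsHom (h : Term C → Term C) : Prop :=
  (∀ c, h (Term.const c) = Term.const c) ∧
  (∀ m, (∃ c, h (Term.null m) = Term.const c) ∨ (∃ m', h (Term.null m) = Term.null m'))

def Atom.mapTerms (h : Term C → Term C) (a : Atom C) : Atom C := ⟨a.pred, a.args.map h⟩

def IsDatabase (D : Set (Atom C)) : Prop :=
  D.Finite ∧ ∀ a ∈ D, ∀ t ∈ a.args, ∃ c, t = Term.const c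

/-- A Boolean conjunctive query (all variables existentially quantified). -/
structure BCQ (C : Type) where
  atoms : List (Atom C)

def SatBCQ (I : Set (Atom C)) (q : BCQ C) : Prop :=
  ∃ h, IsHom h ∧ ∀ a ∈ q.atoms, a.mapTerms h ∈ I

def SatTGD (I : Set (Atom C)) (σ : TGD C) : Prop :=
  ∀ h, IsHom h → (∀ a ∈ σ.body, a.mapTerms h ∈ I) →
    ∃ h', IsHom h' ∧ (∀ v ∈ atomsVars σ.body, h' (Term.var v) = h (Term.var v)) ∧
      σ.head.mapTerms h' ∈ I

/-- Certain-answer entailment `D ∪ Sg ⊨ q`. -/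
def Entails (D : Set (Atom C)) (Sg : Set (TGD C)) (q : BCQ C) : Prop :=
  ∀ I : Set (Atom C), D ⊆ I → (∀ σ ∈ Sg, SatTGD I σ) → SatBCQ I q

/-- Chase sequences of a given length (oblivious chase). -/
inductive ChaseSeq (D : Set (Atom C)) (Sg : Set (TGD C)) : ℕ → Set (Atom C) → Prop where
  | zero : ChaseSeq D Sg 0 D
  | succ {n : ℕ} {I : Set (Atom C)} (σ : TGD C) (θ : Subst C) :
      ChaseSeq D Sg n I → σ ∈ Sg →
      (∀ a ∈ σ.body, a.apply θ ∈ I) →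
      (∀ v ∈ σ.exVars, ∃ m, θ v = Term.null m ∧ ∀ a ∈ I, Term.null m ∉ a.args) →
      ChaseSeq D Sg (n+1) (insert (σ.head.apply θ) I)

/-- Atoms of chase level at most `k` (the level-based chase `chase^k`). -/
inductive ChaseLevel (D : Set (Atom C)) (Sg : Set (TGD C)) : ℕ → Atom C → Prop where
  | base {a : Atom C} : a ∈ D → ChaseLevel D Sg 0 a
  | mono {k : ℕ} {a : Atom C} : ChaseLevel D Sg k a → ChaseLevel D Sg (k+1) a
  | step {k : ℕ} (σ : TGD C) (θ : Subst C) : σ ∈ Sg →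
      (∀ a ∈ σ.body, ChaseLevel D Sg k (a.apply θ)) →
      ChaseLevel D Sg (k+1) (σ.head.apply θ)

def ChaseLevelEntails (D : Set (Atom C)) (Sg : Set (TGD C)) (k : ℕ) (q : BCQ C) : Prop :=
  ∃ h, IsHom h ∧ ∀ a ∈ q.atoms, ChaseLevel D Sg k (a.mapTerms h)

def Derivable (D : Set (Atom C)) (Sg : Set (TGD C)) (a : Atom C) : Prop :=
  ∃ N I, ChaseSeq D Sg N I ∧ a ∈ I

/-- Bounded derivation-depth property of a class of TGD sets. -/
def BDDP (Cl : Set (Set (TGD C))) : Prop :=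
  ∀ Sg ∈ Cl, ∀ q : BCQ C, ∃ k, ∀ D : Set (Atom C),
    IsDatabase D → Entails D Sg q → ChaseLevelEntails D Sg k q

def BDDPof (Sg : Set (TGD C)) : Prop :=
  ∀ q : BCQ C, ∃ k, ∀ D : Set (Atom C),
    IsDatabase D → Entails D Sg q → ChaseLevelEntails D Sg k q

/-- (Instantiated or symbolic) derivation trees. -/
inductive ITree (C : Type) where
  | leaf : Atom C → ITree C
  | node : Atom C → TGD C → Subst C → List (ITree C) → ITree C

def ITree.rootAtom : ITree C → Atom C
  | .leaf a => a
  | .node a _ _ _ => a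

def ITree.label : ITree C → (Atom C ⊕ (Atom C × TGD C × Subst C))
  | .leaf a => .inl a
  | .node a σ θ _ => .inr (a, σ, θ)

def ITree.depth : ITree C → ℕ
  | .leaf _ => 1
  | .node _ _ _ cs => 1 + (cs.attach.map (fun t => ITree.depth t.1)).foldr max 0
decreasing_by simp_wf; have := List.sizeOf_lt_of_mem t.2; omega

def ITree.numNodes : ITree C → ℕ
  | .leaf _ => 1
  | .node _ _ _ cs => 1 + (cs.attach.map (fun t => ITree.numNodes t.1)).sum
decreasing_by simp_wf; have := List.sizeOf_lt_of_mem t.2; omega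

def ITree.numLeaves : ITree C → ℕ
  | .leaf _ => 1
  | .node _ _ _ cs => (cs.attach.map (fun t => ITree.numLeaves t.1)).sum
decreasing_by simp_wf; have := List.sizeOf_lt_of_mem t.2; omega

def ITree.subtrees : ITree C → List (ITree C)
  | .leaf a => [.leaf a]
  | .node a σ θ cs => .node a σ θ cs :: (cs.attach.map (fun t => ITree.subtrees t.1)).flatten
decreasing_by simp_wf; have := List.sizeOf_lt_of_mem t.2; omega

/-- Instantiated derivation trees on a database `D` (Definition 7). -/
inductive IsInstTree (D : Set (Atom C)) (Sg : Set (TGD C)) : ITree C → Prop where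
  | leaf {a : Atom C} : a ∈ D → IsInstTree D Sg (.leaf a)
  | node {a : Atom C} {σ : TGD C} {θ : Subst C} {cs : List (ITree C)} :
      σ ∈ Sg → a = σ.head.apply θ →
      List.Forall₂ (fun (b : Atom C) (t : ITree C) => t.rootAtom = b.apply θ) σ.body cs →
      (∀ t ∈ cs, IsInstTree D Sg t) →
      a.varsF = ∅ →
      IsInstTree D Sg (.node a σ θ cs)

/-- Symbolic derivation trees of `Sg` (Definition 6). -/
inductive IsDerivTree (Sg : Set (TGD C)) : ITree C → Prop where
  | leafnode {a : Atom C} {σ : TGD C} {θ : Subst C} :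
      σ ∈ Sg → a = σ.head.apply θ →
      (∀ b ∈ σ.body, (Atom.apply θ b).nullsF = ∅) →
      IsDerivTree Sg (.node a σ θ [])
  | node {a : Atom C} {σ : TGD C} {θ : Subst C} {cs : List (ITree C)} :
      σ ∈ Sg → a = σ.head.apply θ → cs ≠ [] →
      List.Forall₂ (fun (b : Atom C) (t : ITree C) => t.rootAtom = b.apply θ) σ.body cs →
      (∀ t ∈ cs, IsDerivTree Sg t) →
      IsDerivTree Sg (.node a σ θ cs)

/-- A tree supports an atom if the root atom is a homomorphic image of it. -/
def Supports (T : ITree C) (a : Atom C) : Prop :=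
  ∃ h, IsHom h ∧ a.mapTerms h = T.rootAtom

def compSubst (τ : Term C → Term C) (θ : Subst C) : Subst C := fun v => τ (θ v)

/-- `InstOf T T'`: `T'` is obtained from the symbolic tree `T` by applying
further substitutions nodewise and expanding symbolic leaves by database-atom
leaves (Definition 7). -/
inductive InstOf : ITree C → ITree C → Prop where
  | leafExpand {a : Atom C} {σ : TGD C} {θ : Subst C} (τ : Term C → Term C) :
      InstOf (.node a σ θ [])
        (.node (σ.head.apply (compSubst τ θ)) σ (compSubst τ θ)
          (σ.body.map (fun b => ITree.leaf (b.apply (compSubst τ θ)))))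
  | node {a : Atom C} {σ : TGD C} {θ : Subst C} {cs cs' : List (ITree C)}
      (τ : Term C → Term C) : cs ≠ [] →
      List.Forall₂ InstOf cs cs' →
      InstOf (.node a σ θ cs) (.node (σ.head.apply (compSubst τ θ)) σ (compSubst τ θ) cs')

def AtomicEntails (D : Set (Atom C)) (Sg : Set (TGD C)) (p : ℕ) (z : List ℕ) : Prop :=
  Entails D Sg ⟨[⟨p, z.map Term.var⟩]⟩

/-- BDTDP with a concrete tree-depth bound `k`. -/
def BDTDPbound (Sg : Set (TGD C)) (k : ℕ) : Prop :=
  ∀ (p : ℕ) (z : List ℕ) (D : Set (Atom C)), IsDatabase D →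
    (AtomicEntails D Sg p z ↔
      ∃ (T : ITree C) (n : List (Term C)),
        IsInstTree D Sg T ∧ T.depth ≤ k ∧ Supports T ⟨p, n⟩ ∧
        ∃ h, IsHom h ∧ (z.map Term.var).map h = n)

def BDTDPof (Sg : Set (TGD C)) : Prop := ∃ k, BDTDPbound Sg k

/-- Bounded derivation tree depth property of a class of TGD sets. -/
def BDTDP (Cl : Set (Set (TGD C))) : Prop := ∀ Sg ∈ Cl, BDTDPof Sg

/-- The five loop pattern types of generalised loop restriction. -/
def TypeI (P : List (Step C)) : Prop := LRcond P

def TypeII (P : List (Step C)) : Prop :=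
  ∃ (i : ℕ) (hi : i + 1 < P.length),
    ∃ Bh Bb : List (Atom C),
      (∀ a, a ∈ (P.get ⟨i, Nat.lt_of_succ_lt hi⟩).inst.body ↔ (a ∈ Bh ∨ a ∈ Bb)) ∧
      (∀ a, ¬(a ∈ Bh ∧ a ∈ Bb)) ∧
      (P.get ⟨i+1, hi⟩).atom ∈ Bb ∧
      ((P.get ⟨i, Nat.lt_of_succ_lt hi⟩).atom.varsF ∪ atomsVars Bh) ∩ atomsVars Bb = ∅

def TypeIII (P : List (Step C)) : Prop :=
  ∀ i (hi : i + 1 < P.length), ∀ β ∈ (P.get ⟨i, Nat.lt_of_succ_lt hi⟩).inst.body,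
    (P.get ⟨i, Nat.lt_of_succ_lt hi⟩).inst.varsF ⊆ β.varsF

def TypeIV (P : List (Step C)) : Prop :=
  ∀ i (hi : i + 1 < P.length), ∀ β ∈ (P.get ⟨i, Nat.lt_of_succ_lt hi⟩).inst.body,
    β ≠ (P.get ⟨i+1, hi⟩).atom →
    ((P.get ⟨i+1, hi⟩).atom.varsF ∩ β.varsF).Nonempty →
    ∀ v ∈ (P.get ⟨i+1, hi⟩).atom.varsF ∩ β.varsF,
      ∀ j (hj : j < P.length), j ≤ i → v ∈ (P.get ⟨j, hj⟩).atom.varsF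

def TypeV (P : List (Step C)) : Prop :=
  ∃ (i : ℕ) (hi : i + 1 < P.length),
    ∃ Bh Bb : List (Atom C),
      (∀ a, a ∈ (P.get ⟨i, Nat.lt_of_succ_lt hi⟩).inst.body ↔ (a ∈ Bh ∨ a ∈ Bb)) ∧
      (∀ a, ¬(a ∈ Bh ∧ a ∈ Bb)) ∧
      (∀ j (hj : j < P.length), i + 1 ≤ j → (P.get ⟨j, hj⟩).atom ∉ Bh) ∧
      atomsNulls Bh ≠ ∅

/-- Generalised loop restricted (GLR) sets of TGDs. -/
def GLR (Sg : Set (TGD C)) : Prop :=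
  ∀ P, IsLoopPattern Sg P → TypeI P ∨ TypeII P ∨ TypeIII P ∨ TypeIV P ∨ TypeV P

/-- `N` bounds ∼-distinct derivation paths of `Sg`. -/
def PathBound (Sg : Set (TGD C)) (N : ℕ) : Prop :=
  ∀ P : List (Step C), IsDerivationPath Sg P → N < P.length →
    ∃ (i j : ℕ) (hi : i < P.length) (hj : j < P.length), i < j ∧
      PairComp (P.get ⟨i, hi⟩) (P.get ⟨j, hj⟩)


lemma mem_foldr_varsF {w : ℕ} {l : List (Term C)} :
    w ∈ l.foldr (fun t s => t.varsF ∪ s) ∅ ↔ ∃ t ∈ l, w ∈ t.varsF := by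
  induction l with
  | nil => simp
  | cons t l ih => simp [ih]

lemma mem_atom_varsF {w : ℕ} {a : Atom C} :
    w ∈ a.varsF ↔ ∃ t ∈ a.args, w ∈ t.varsF := mem_foldr_varsF

lemma exists_of_mem_apply_varsF {w : ℕ} {a : Atom C} {θ : Subst C}
    (h : w ∈ (a.apply θ).varsF) : ∃ u ∈ a.varsF, θ u = Term.var w := by
  rw [mem_atom_varsF] at h
  obtain ⟨t, ht, hw⟩ := h
  simp only [Atom.apply, List.mem_map] at ht
  obtain ⟨s, hs, rfl⟩ := ht
  cases s with
  | const c => simp [Term.apply, Term.varsF] at hw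
  | null m => simp [Term.apply, Term.varsF] at hw
  | var u =>
    refine ⟨u, mem_atom_varsF.mpr ⟨Term.var u, hs, by simp [Term.varsF]⟩, ?_⟩
    simp only [Term.apply] at hw
    cases h' : θ u <;> simp [h', Term.varsF] at hw ⊢
    exact hw.symm

lemma head_varsF_subset (σ : TGD C) : σ.head.varsF ⊆ σ.varsF := by
  intro v hv
  simp only [TGD.varsF, atomsVars, List.foldr_cons]
  exact Finset.mem_union_left _ hv

/-- The redirection lemma for Type IV loop patterns: in a loop pattern
`(w_1, …, w_n)` built from a single rule `σ` with body `β :: B` (`β ∉ B`),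
whose first and last elements are comparable, any substitution `θ'` defined on
`var(σθ_n)` by `θ'(θ_n X) = θ_n X` when `θ_n X` lies in `⋂_i var(α_iθ_i)` and
`θ'(θ_n X) = θ_1 X` otherwise, makes `θ* = θ' ∘ θ_n` satisfy
`head(σθ*) = head(σθ_1)`. -/
theorem typeIV_redirection (C : Type) (σ : TGD C) (β : Atom C) (B : List (Atom C))
    (hbody : σ.body = β :: B) (hβ : β ∉ B)
    (n : ℕ) (hn : 2 ≤ n) (θ : ℕ → Subst C)
    (hloop : IsLoopPattern {σ}
      ((List.range n).map (fun i => Step.mk (σ.head.apply (θ i)) σ (θ i))))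
    (hIV : TypeIV ((List.range n).map (fun i => Step.mk (σ.head.apply (θ i)) σ (θ i))))
    (hcomp : PairComp ⟨σ.head.apply (θ 0), σ, θ 0⟩ ⟨σ.head.apply (θ (n-1)), σ, θ (n-1)⟩)
    (θ' : Term C → Term C)
    (hθ' : ∀ v ∈ σ.varsF,
      ((∃ w, θ (n-1) v = Term.var w ∧ ∀ i < n, w ∈ (σ.head.apply (θ i)).varsF) →
          θ' (θ (n-1) v) = θ (n-1) v) ∧
      ((¬ ∃ w, θ (n-1) v = Term.var w ∧ ∀ i < n, w ∈ (σ.head.apply (θ i)).varsF) →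
          θ' (θ (n-1) v) = θ 0 v)) :
    σ.head.apply (fun v => θ' (θ (n-1) v)) = σ.head.apply (θ 0) := by
  unfold Atom.apply
  congr 1
  apply List.map_congr_left
  intro t ht
  cases t with
  | const c => simp [Term.apply]
  | null m => simp [Term.apply]
  | var v =>
    have hvh : v ∈ σ.head.varsF :=
      mem_atom_varsF.mpr ⟨Term.var v, ht, by simp [Term.varsF]⟩
    have hv : v ∈ σ.varsF := head_varsF_subset σ hvh
    simp only [Term.apply]
    by_cases hc : ∃ w, θ (n-1) v = Term.var w ∧ ∀ i < n, w ∈ (σ.head.apply (θ i)).varsF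
    · obtain ⟨w, hw, hall⟩ := hc
      rw [(hθ' v hv).1 ⟨w, hw, hall⟩, hw]
      -- show Term.var w = θ 0 v using position comparability
      obtain ⟨u, hu, hθ0u⟩ := exists_of_mem_apply_varsF (hall 0 (by omega))
      obtain ⟨_, _, _, heq, hcommon⟩ := hcomp
      have hvl : v ∈ σ.varsList := (Finset.mem_sort _).mpr hv
      have hul : u ∈ σ.varsList := (Finset.mem_sort _).mpr (head_varsF_subset σ hu)
      obtain ⟨⟨i, hi⟩, hvi⟩ := List.mem_iff_get.mp hvl
      have hi0 : i < (σ.varsList.map (θ 0)).length := by simpa using hi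
      have hi1 : i < (σ.varsList.map (θ (n-1))).length := by simpa using hi
      have hvi' : σ.varsList[i] = v := hvi
      have hget0 : (σ.varsList.map (θ 0)).get ⟨i, hi0⟩ = θ 0 v := by
        simp [List.get_eq_getElem, List.getElem_map, hvi']
      have hget1 : (σ.varsList.map (θ (n-1))).get ⟨i, hi1⟩ = Term.var w := by
        simp [List.get_eq_getElem, List.getElem_map, hvi', hw]
      have hmem0 : Term.var w ∈ σ.varsList.map (θ 0) :=
        List.mem_map.mpr ⟨u, hul, hθ0u⟩
      have hmem1 : Term.var w ∈ σ.varsList.map (θ (n-1)) :=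
        List.mem_map.mpr ⟨v, hvl, hw⟩
      have := (hcommon (Term.var w) hmem0 hmem1 i hi0 hi1).mpr hget1
      rw [hget0] at this
      exact this.symm
    · exact (hθ' v hv).2 hc

end Paper
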